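/- arXiv:2306.02381 — 2 statements merged into one kernel-verified Lean document; each statement's English description precedes it below -/
import Mathlib

section
/- Let A ∈ ℝ_+^n satisfy: there are exactly k indices i with A_i ≥ c₁ and n − k indices with A_i ≤ c₂, where c₂ ≤ ε/n. Let ι : [n] → [m] be a function and b a bucket such that exactly one x with A_x ≥ c₁ satisfies ι(x) = b. Then |ι(A)_b − A_x| ≤ ε and |ι(∂A)_b / ι(A)_b − x| ≤ ε n / (c₁), so the rounding int(ι(∂A)_b / ι(A)_b) = x whenever ε n / c₁ < 1/2. -/
/-- Approximate recovery of an isolated heavy element: if bucket `b` contains a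
unique heavy index `x` (`A_x ≥ c₁`) and the light entries are at most `c₂ ≤ ε/n`,
then `ι(A)_b` approximates `A_x` within `ε`, the ratio `ι(∂A)_b / ι(A)_b`
approximates `x` within `ε n / c₁`, and rounding recovers `x` when `ε n / c₁ < 1/2`. -/
theorem approximate_isolated_recovery (n m : ℕ) (hn : 0 < n) (c₁ c₂ ε : ℝ)
    (hc₁ : 0 < c₁) (hε : 0 ≤ ε) (hc₂ : 0 ≤ c₂) (hc₂ε : c₂ ≤ ε / n)
    (A : Fin n → ℝ) (hA : ∀ i, 0 ≤ A i)
    (hdich : ∀ i, c₁ ≤ A i ∨ A i ≤ c₂)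
    (ι : Fin n → Fin m) (b : Fin m) (x : Fin n)
    (hxh : c₁ ≤ A x) (hxb : ι x = b)
    (huniq : ∀ y : Fin n, c₁ ≤ A y → ι y = b → y = x) :
    |(∑ i ∈ Finset.univ.filter (fun i => ι i = b), A i) - A x| ≤ ε ∧
    |(∑ i ∈ Finset.univ.filter (fun i => ι i = b), (i : ℝ) * A i) /
        (∑ i ∈ Finset.univ.filter (fun i => ι i = b), A i) - (x : ℝ)| ≤ ε * n / c₁ ∧
    (ε * n / c₁ < 1 / 2 →
      round ((∑ i ∈ Finset.univ.filter (fun i => ι i = b), (i : ℝ) * A i) /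
        (∑ i ∈ Finset.univ.filter (fun i => ι i = b), A i)) = (x : ℤ)) := by
  classical
  set s : Finset (Fin n) := Finset.univ.filter (fun i => ι i = b) with hs
  have hxs : x ∈ s := by simp [hs, hxb]
  have hlight : ∀ i ∈ s.erase x, A i ≤ c₂ := by
    intro i hi
    rcases Finset.mem_erase.mp hi with ⟨hne, his⟩
    rcases hdich i with h | h
    · exact absurd (huniq i h (by simpa [hs] using his)) hne
    · exact h
  have hnpos : (0:ℝ) < n := by exact_mod_cast hn
  have hcard : ((s.erase x).card : ℝ) ≤ n := by
    exact_mod_cast le_trans (Finset.card_le_card (Finset.erase_subset _ _))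
      (by simpa using Finset.card_le_card (Finset.subset_univ s))
  have htail : ∑ i ∈ s.erase x, A i ≤ ε := by
    calc ∑ i ∈ s.erase x, A i ≤ ∑ _i ∈ s.erase x, c₂ := Finset.sum_le_sum hlight
    _ = (s.erase x).card * c₂ := by simp [mul_comm]
    _ ≤ n * (ε / n) := by
        apply mul_le_mul hcard hc₂ε (by positivity) (le_of_lt hnpos)
    _ = ε := by field_simp
  have htail0 : 0 ≤ ∑ i ∈ s.erase x, A i := Finset.sum_nonneg fun i _ => hA i
  have hsum : ∑ i ∈ s, A i = A x + ∑ i ∈ s.erase x, A i :=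
    (Finset.add_sum_erase s A hxs).symm
  have part1 : |(∑ i ∈ s, A i) - A x| ≤ ε := by
    rw [hsum]
    rw [abs_of_nonneg (by linarith)]
    linarith
  have hT : c₁ ≤ ∑ i ∈ s, A i := by linarith
  have hTpos : 0 < ∑ i ∈ s, A i := lt_of_lt_of_le hc₁ hT
  -- numerator bound
  have hnum : |(∑ i ∈ s, (i : ℝ) * A i) - (x : ℝ) * ∑ i ∈ s, A i| ≤ ε * n := by
    have : (∑ i ∈ s, (i : ℝ) * A i) - (x : ℝ) * ∑ i ∈ s, A i
        = ∑ i ∈ s, ((i : ℝ) - x) * A i := by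
      rw [Finset.mul_sum, ← Finset.sum_sub_distrib]
      congr 1; ext i; ring
    rw [this]
    have hx0 : ((x:ℝ) - x) * A x = 0 := by ring
    have hsplit : ∑ i ∈ s, ((i : ℝ) - x) * A i = ∑ i ∈ s.erase x, ((i : ℝ) - x) * A i := by
      rw [← Finset.add_sum_erase s _ hxs, hx0, zero_add]
    rw [hsplit]
    calc |∑ i ∈ s.erase x, ((i : ℝ) - x) * A i|
        ≤ ∑ i ∈ s.erase x, |((i : ℝ) - x) * A i| := Finset.abs_sum_le_sum_abs _ _
      _ ≤ ∑ i ∈ s.erase x, n * A i := by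
          apply Finset.sum_le_sum
          intro i hi
          rw [abs_mul, abs_of_nonneg (hA i)]
          apply mul_le_mul_of_nonneg_right _ (hA i)
          rw [abs_sub_le_iff]
          constructor
          · have h1 : (i:ℝ) ≤ n := by exact_mod_cast le_of_lt i.isLt
            have h2 : (0:ℝ) ≤ (x:ℝ) := by positivity
            linarith
          · have h1 : (x:ℝ) ≤ n := by exact_mod_cast le_of_lt x.isLt
            have h2 : (0:ℝ) ≤ (i:ℝ) := by positivity
            linarith
      _ = n * ∑ i ∈ s.erase x, A i := by rw [Finset.mul_sum]
      _ ≤ n * ε := by apply mul_le_mul_of_nonneg_left htail (le_of_lt hnpos)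
      _ = ε * n := mul_comm _ _
  have part2 : |(∑ i ∈ s, (i : ℝ) * A i) / (∑ i ∈ s, A i) - (x : ℝ)| ≤ ε * n / c₁ := by
    have key : (∑ i ∈ s, (i : ℝ) * A i) / (∑ i ∈ s, A i) - (x : ℝ)
        = ((∑ i ∈ s, (i : ℝ) * A i) - (x : ℝ) * ∑ i ∈ s, A i) / (∑ i ∈ s, A i) := by
      field_simp
    rw [key, abs_div, abs_of_pos hTpos]
    calc |(∑ i ∈ s, (i : ℝ) * A i) - (x : ℝ) * ∑ i ∈ s, A i| / (∑ i ∈ s, A i)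
        ≤ (ε * n) / (∑ i ∈ s, A i) := by
          gcongr
      _ ≤ ε * n / c₁ := by
          apply div_le_div_of_nonneg_left (by positivity) hc₁ hT
  refine ⟨part1, part2, ?_⟩
  intro hhalf
  have habs : |(∑ i ∈ s, (i : ℝ) * A i) / (∑ i ∈ s, A i) - (x : ℝ)| < 1 / 2 :=
    lt_of_le_of_lt part2 hhalf
  rw [abs_sub_lt_iff] at habs
  rw [round_eq]
  rw [Int.floor_eq_iff]
  push_cast
  constructor <;> linarith [habs.1, habs.2]
end

section
/- Let V ∈ ℝ_+^n and suppose exactly one index x satisfies V_x ≥ c₁ among indices mapping to bucket b under ι : [n] → [m], all other indices y with ι(y) = b satisfy V_y ≤ c₂, there are at most n such indices, all indices are < n, and n² c₂ ≤ ε c₁ with ε < 1/2. Then the estimate x̂ = (Σ_{ι(y)=b} y V_y) / (Σ_{ι(y)=b} V_y) satisfies |x̂ − x| ≤ 2ε, and hence int(x̂) = x. -/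
/-- Index-recovery ratio: if bucket `b` contains a unique heavy index `x`
(`V_x ≥ c₁`), the other bucket entries are `≤ c₂`, and `n²c₂ ≤ εc₁` with `ε < 1/2`,
then the ratio estimate `x̂` satisfies `|x̂ − x| ≤ 2ε` and rounds to `x`. -/
theorem ratio_estimate_rounds_correctly (n m : ℕ) (c₁ c₂ ε : ℝ)
    (hc₁ : 0 < c₁) (hc₂ : 0 ≤ c₂) (hε : 0 ≤ ε) (hεhalf : ε < 1 / 2)
    (hcontam : (n : ℝ) ^ 2 * c₂ ≤ ε * c₁)
    (V : Fin n → ℝ) (hV : ∀ i, 0 ≤ V i)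
    (ι : Fin n → Fin m) (b : Fin m) (x : Fin n)
    (hx : ι x = b) (hxh : c₁ ≤ V x)
    (hlight : ∀ y : Fin n, ι y = b → y ≠ x → V y ≤ c₂) :
    |(∑ y ∈ Finset.univ.filter (fun y => ι y = b), (y : ℝ) * V y) /
        (∑ y ∈ Finset.univ.filter (fun y => ι y = b), V y) - (x : ℝ)| ≤ 2 * ε ∧
    round ((∑ y ∈ Finset.univ.filter (fun y => ι y = b), (y : ℝ) * V y) /
        (∑ y ∈ Finset.univ.filter (fun y => ι y = b), V y)) = (x : ℤ) := by
  set S := Finset.univ.filter (fun y => ι y = b) with hS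
  set D := ∑ y ∈ S, V y with hDdef
  set N := ∑ y ∈ S, (y : ℝ) * V y with hNdef
  have hxS : x ∈ S := by simp [hS, hx]
  have hD : c₁ ≤ D :=
    le_trans hxh (Finset.single_le_sum (fun i _ => hV i) hxS)
  have hDpos : 0 < D := lt_of_lt_of_le hc₁ hD
  have hcard : (S.card : ℝ) ≤ n := by
    exact_mod_cast Nat.cast_le.mpr (le_trans (Finset.card_le_univ S) (by simp))
  have key : |N - (x : ℝ) * D| ≤ ε * c₁ := by
    have hsub : N - (x : ℝ) * D = ∑ y ∈ S, ((y : ℝ) - x) * V y := by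
      rw [hNdef, hDdef, Finset.mul_sum, ← Finset.sum_sub_distrib]
      congr 1; ext y; ring
    rw [hsub]
    calc |∑ y ∈ S, ((y : ℝ) - x) * V y| ≤ ∑ y ∈ S, |((y : ℝ) - x) * V y| :=
          Finset.abs_sum_le_sum_abs _ _
      _ ≤ ∑ y ∈ S, (n : ℝ) * c₂ := by
          apply Finset.sum_le_sum
          intro y hy
          rcases eq_or_ne y x with rfl | hne
          · simp
            positivity
          · rw [abs_mul, abs_of_nonneg (hV y)]
            have h1 : |(y : ℝ) - x| ≤ n := by
              have hy1 : (y : ℝ) < n := by exact_mod_cast y.isLt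
              have hx1 : (x : ℝ) < n := by exact_mod_cast x.isLt
              have : (0:ℝ) ≤ y := by positivity
              have : (0:ℝ) ≤ x := by positivity
              rw [abs_sub_le_iff]; constructor <;> linarith
            have h2 : V y ≤ c₂ := hlight y (by simpa [hS] using hy) hne
            exact mul_le_mul h1 h2 (hV y) (by positivity)
      _ = (S.card : ℝ) * ((n:ℝ) * c₂) := by rw [Finset.sum_const, nsmul_eq_mul]
      _ ≤ (n : ℝ) * ((n:ℝ) * c₂) := by
          apply mul_le_mul_of_nonneg_right hcard (by positivity)
      _ = (n : ℝ)^2 * c₂ := by ring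
      _ ≤ ε * c₁ := hcontam
  have hmain : |N / D - (x : ℝ)| ≤ ε := by
    have : N / D - (x : ℝ) = (N - (x:ℝ) * D) / D := by
      field_simp
    rw [this, abs_div, abs_of_pos hDpos, div_le_iff₀ hDpos]
    calc |N - (x:ℝ)*D| ≤ ε * c₁ := key
      _ ≤ ε * D := by nlinarith
  refine ⟨le_trans hmain (by linarith), ?_⟩
  have habs := abs_sub_le_iff.mp hmain
  rw [round_eq]
  rw [Int.floor_eq_iff]
  push_cast
  constructor <;> [linarith [habs.2]; linarith [habs.1]]
end
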